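/- (Semidiscrete stability) Suppose ‖f(·,t,u,w)‖ ≤ ‖g(·,t)‖ uniformly in u, w, and D(u) ≥ D₋ > 0. If u_N : [0,t₀] → V_N is differentiable and satisfies (u_N', v) + a(D(u_N); u_N, v) = (f(t,u_N,Ju_N), v) for all v ∈ V_N, and μ := D₋ · inf_{v∈V, v≠0} a(v,v)/‖v‖² > 0, then ‖u_N(t)‖ ≤ e^{-μ t}‖u_N(0)‖ + ∫₀ᵗ e^{-μ(t-s)} ‖g(·,s)‖ ds. -/

import Mathlib

/-! Since `‖u_N‖` is not differentiable where `u_N` vanishes, work with the smooth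
`χ = √(‖u_N‖² + δ²) - δ`. Testing the Galerkin equation with `u_N` and using the
coercivity of `a` gives the linear differential inequality `χ' ≤ -μ χ + g`. Multiplying
by `e^{μ s}` makes the left side `(e^{μ s} χ)'`, and integrating bounds `χ`, hence `‖u_N‖`
up to an error `δ`, which is then sent to `0`. -/

open Real Set intervalIntegral RealInnerProductSpace

theorem le_exp_mul_add_integral_of_hasDerivAt_le {χ χ' g : ℝ → ℝ} {μ t : ℝ}
    (hg : Continuous g) (ht : 0 ≤ t) (hχ : ∀ s ∈ Icc 0 t, HasDerivAt χ (χ' s) s)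
    (hle : ∀ s ∈ Icc 0 t, χ' s ≤ -μ * χ s + g s) :
    χ t ≤ exp (-μ * t) * χ 0 + ∫ s in (0:ℝ)..t, exp (-μ * (t - s)) * g s := by
  set I : ℝ → ℝ := fun s => ∫ x in (0:ℝ)..s, exp (μ * x) * g x
  set φ : ℝ → ℝ := fun s => exp (μ * s) * χ s - I s
  have hφ : ∀ s ∈ Icc 0 t, HasDerivAt φ (exp (μ * s) * (μ * χ s + χ' s - g s)) s := by
    intro s hs
    have hexp : HasDerivAt (fun s => exp (μ * s)) (exp (μ * s) * μ) s := by
      simpa using ((hasDerivAt_id s).const_mul μ).exp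
    have hI : HasDerivAt I (exp (μ * s) * g s) s :=
      (Continuous.integral_hasStrictDerivAt (by fun_prop) 0 s).hasDerivAt
    exact ((hexp.mul (hχ s hs)).sub hI).congr_deriv (by ring)
  have hanti : AntitoneOn φ (Icc 0 t) := by
    refine antitoneOn_of_hasDerivWithinAt_nonpos (convex_Icc 0 t)
      (fun s hs => (hφ s hs).continuousAt.continuousWithinAt)
      (fun s hs => (hφ s (interior_subset hs)).hasDerivWithinAt) fun s hs => ?_
    have := hle s (interior_subset hs)
    exact mul_nonpos_of_nonneg_of_nonpos (exp_pos _).le (by linarith)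
  have hφt : exp (μ * t) * χ t ≤ χ 0 + I t := by
    have := hanti (left_mem_Icc.2 ht) (right_mem_Icc.2 ht) ht
    simp only [φ, I, mul_zero, exp_zero, one_mul, integral_same, sub_zero] at this
    linarith
  have hconv : ∫ s in (0:ℝ)..t, exp (-μ * (t - s)) * g s = exp (-μ * t) * I t := by
    rw [← integral_const_mul]
    congr 1 with s
    rw [← mul_assoc, ← exp_add]
    ring_nf
  calc χ t = exp (-μ * t) * (exp (μ * t) * χ t) := by
        rw [← mul_assoc, ← exp_add]; simp
    _ ≤ exp (-μ * t) * (χ 0 + I t) := by gcongr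
    _ = _ := by rw [hconv]; ring

theorem mul_norm_sq_le_of_eq_mul_sInf {E : Type*} [NormedAddCommGroup E] {a : E → E → ℝ}
    {D μ : ℝ} (hD : 0 ≤ D)
    (hμdef : μ = D * sInf ((fun v : E => a v v / ‖v‖ ^ 2) '' {v : E | v ≠ 0}))
    (hμ : 0 < μ) {v : E} (hv : v ≠ 0) : μ * ‖v‖ ^ 2 ≤ D * a v v := by
  set S := (fun v : E => a v v / ‖v‖ ^ 2) '' {v : E | v ≠ 0}
  have hS : BddBelow S := by
    by_contra hS
    rw [Real.sInf_of_not_bddBelow hS, mul_zero] at hμdef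
    exact hμ.ne' hμdef
  calc μ * ‖v‖ ^ 2 ≤ D * (a v v / ‖v‖ ^ 2) * ‖v‖ ^ 2 := by
        rw [hμdef]; gcongr; exact csInf_le hS ⟨v, hv, rfl⟩
    _ = D * a v v := by field_simp

section InnerProductSpace

variable {E : Type*} [NormedAddCommGroup E] [InnerProductSpace ℝ E]

theorem hasDerivAt_sqrt_norm_sq_add {u : ℝ → E} {u' : E} {s c : ℝ} (hu : HasDerivAt u u' s)
    (hc : 0 < c) :
    HasDerivAt (fun s => √(‖u s‖ ^ 2 + c)) (⟪u', u s⟫ / √(‖u s‖ ^ 2 + c)) s := by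
  convert (hu.norm_sq.add_const c).sqrt (by positivity) using 1
  rw [real_inner_comm]
  field_simp

theorem div_sqrt_sq_add_sq_le {n δ g μ p : ℝ} (hδ : 0 < δ) (hg : 0 ≤ g) (hμ : 0 ≤ μ)
    (hp : p ≤ g * n - μ * n ^ 2) :
    p / √(n ^ 2 + δ ^ 2) ≤ -μ * (√(n ^ 2 + δ ^ 2) - δ) + g := by
  set ψ := √(n ^ 2 + δ ^ 2)
  have hψ : ψ ^ 2 = n ^ 2 + δ ^ 2 := sq_sqrt (by positivity)
  have hnψ : n ≤ ψ := le_sqrt_of_sq_le (by nlinarith)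
  have hδψ : δ ≤ ψ := le_sqrt_of_sq_le (by nlinarith)
  rw [div_le_iff₀ (by linarith)]
  nlinarith [mul_le_mul_of_nonneg_left hnψ hg,
    mul_le_mul_of_nonneg_left hδψ (mul_nonneg hμ hδ.le)]

theorem norm_le_exp_mul_add_integral_of_inner_le {u u' : ℝ → E} {g : ℝ → ℝ} {μ t : ℝ}
    (hμ : 0 ≤ μ) (hg : Continuous g) (ht : 0 ≤ t)
    (hu : ∀ s ∈ Icc 0 t, HasDerivAt u (u' s) s) (hg₀ : ∀ s ∈ Icc 0 t, 0 ≤ g s)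
    (hle : ∀ s ∈ Icc 0 t, ⟪u' s, u s⟫ ≤ g s * ‖u s‖ - μ * ‖u s‖ ^ 2) :
    ‖u t‖ ≤ exp (-μ * t) * ‖u 0‖ + ∫ s in (0:ℝ)..t, exp (-μ * (t - s)) * g s := by
  refine le_of_forall_pos_le_add fun δ hδ => ?_
  set ψ : ℝ → ℝ := fun s => √(‖u s‖ ^ 2 + δ ^ 2)
  have hχ := le_exp_mul_add_integral_of_hasDerivAt_le (χ := fun s => ψ s - δ) hg ht
    (fun s hs => (hasDerivAt_sqrt_norm_sq_add (hu s hs) (by positivity)).sub_const δ)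
    (fun s hs => div_sqrt_sq_add_sq_le hδ (hg₀ s hs) hμ (hle s hs))
  have hψ₀ : ψ 0 - δ ≤ ‖u 0‖ := by
    rw [sub_le_iff_le_add]
    exact sqrt_le_iff.2 ⟨by positivity, by nlinarith [norm_nonneg (u 0)]⟩
  have hψt : ‖u t‖ ≤ ψ t := le_sqrt_of_sq_le (by nlinarith)
  have := mul_le_mul_of_nonneg_left hψ₀ (exp_pos (-μ * t)).le
  linarith

end InnerProductSpace

theorem stmt17_general {E : Type*} [NormedAddCommGroup E] [InnerProductSpace ℝ E]
    (a : E → E → ℝ) (aD : E → E → E → ℝ) (Dm : ℝ) (hDm : 0 < Dm)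
    (hDcoer : ∀ w u, Dm * a u u ≤ aD w u u)
    (μ t0 : ℝ)
    (hμdef : μ = Dm * sInf ((fun v : E => a v v / ‖v‖ ^ 2) '' {v : E | v ≠ 0}))
    (hμ : 0 < μ)
    (VN : Submodule ℝ E) (uN uN' : ℝ → E) (F : ℝ → E) (g : ℝ → ℝ)
    (hg : Continuous g) (hbound : ∀ t ∈ Set.Icc (0:ℝ) t0, ‖F t‖ ≤ g t)
    (hmem : ∀ t ∈ Set.Icc (0:ℝ) t0, uN t ∈ VN)
    (hderiv : ∀ t ∈ Set.Icc (0:ℝ) t0, HasDerivAt uN (uN' t) t)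
    (heq : ∀ t ∈ Set.Icc (0:ℝ) t0, ∀ v ∈ VN,
      ⟪uN' t, v⟫ + aD (uN t) (uN t) v = ⟪F t, v⟫) :
    ∀ t ∈ Set.Icc (0:ℝ) t0,
      ‖uN t‖ ≤ Real.exp (-μ * t) * ‖uN 0‖ +
        ∫ s in (0:ℝ)..t, Real.exp (-μ * (t - s)) * g s := by
  rintro t ⟨ht, htt₀⟩
  have hsub : Icc 0 t ⊆ Icc 0 t0 := Icc_subset_Icc_right htt₀
  refine norm_le_exp_mul_add_integral_of_inner_le hμ.le hg ht (fun s hs => hderiv s (hsub hs))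
    (fun s hs => (norm_nonneg _).trans (hbound s (hsub hs))) fun s hs => ?_
  replace hs := hsub hs
  rcases eq_or_ne (uN s) 0 with h0 | h0
  · simp [h0]
  have hGalerkin := heq s hs (uN s) (hmem s hs)
  calc ⟪uN' s, uN s⟫ = ⟪F s, uN s⟫ - aD (uN s) (uN s) (uN s) := by linarith
    _ ≤ ‖F s‖ * ‖uN s‖ - Dm * a (uN s) (uN s) :=
        sub_le_sub (real_inner_le_norm _ _) (hDcoer _ _)
    _ ≤ g s * ‖uN s‖ - μ * ‖uN s‖ ^ 2 :=
        sub_le_sub (by gcongr; exact hbound s hs)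
          (mul_norm_sq_le_of_eq_mul_sInf hDm.le hμdef hμ h0)

/-- Semidiscrete stability: if ‖f(t,u_N,Ju_N)‖ ≤ ‖g(t)‖ (represented by the bound
‖F t‖ ≤ g t), aD(w;u,u) ≥ D₋ a(u,u), and
μ := D₋ · inf_{v≠0} a(v,v)/‖v‖² > 0, then the Galerkin solution satisfies
‖u_N(t)‖ ≤ e^{-μt}‖u_N(0)‖ + ∫₀ᵗ e^{-μ(t-s)}‖g(s)‖ ds. -/
theorem stmt17 {E : Type*} [NormedAddCommGroup E] [InnerProductSpace ℝ E]
    (a : E → E → ℝ) (aD : E → E → E → ℝ) (Dm : ℝ) (hDm : 0 < Dm)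
    (hDcoer : ∀ w u, Dm * a u u ≤ aD w u u)
    (μ t0 : ℝ) (ht0 : 0 < t0)
    (hμdef : μ = Dm * sInf ((fun v : E => a v v / ‖v‖ ^ 2) '' {v : E | v ≠ 0}))
    (hμ : 0 < μ)
    (VN : Submodule ℝ E) (uN uN' : ℝ → E) (F : ℝ → E) (g : ℝ → ℝ)
    (hg : Continuous g) (hbound : ∀ t ∈ Set.Icc (0:ℝ) t0, ‖F t‖ ≤ g t)
    (hmem : ∀ t ∈ Set.Icc (0:ℝ) t0, uN t ∈ VN)
    (hderiv : ∀ t ∈ Set.Icc (0:ℝ) t0, HasDerivAt uN (uN' t) t)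
    (heq : ∀ t ∈ Set.Icc (0:ℝ) t0, ∀ v ∈ VN,
      ⟪uN' t, v⟫ + aD (uN t) (uN t) v = ⟪F t, v⟫) :
    ∀ t ∈ Set.Icc (0:ℝ) t0,
      ‖uN t‖ ≤ Real.exp (-μ * t) * ‖uN 0‖ +
        ∫ s in (0:ℝ)..t, Real.exp (-μ * (t - s)) * g s :=
  stmt17_general a aD Dm hDm hDcoer μ t0 hμdef hμ VN uN uN' F g hg hbound hmem hderiv heq
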